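/- (Wigner classification, complex case.) Let G be a finite group, φ : G → ℤ/2 a surjective group homomorphism with kernel G₀, a ∈ G ∖ G₀, and ρ : G₀ → GL(n, ℂ) an irreducible group homomorphism with conjugate representation ρ*(g) = σ(ρ(a⁻¹ g a)). Suppose there is no S ∈ GL(n, ℂ) with S · ρ*(g) = ρ(g) · S for all g ∈ G₀. Then the induced magnetic representation ρ̃ of (G, φ) on ℂ^{2n} is irreducible, and End_{(G,φ)}(ρ̃) is isomorphic to ℂ as an ℝ-algebra. -/

import Mathlib

open Matrix

noncomputable section

/-- Entrywise complex conjugation of a complex matrix. -/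
def conjMat {m n : ℕ} (M : Matrix (Fin m) (Fin n) ℂ) : Matrix (Fin m) (Fin n) ℂ :=
  M.map (starRingEnd ℂ)

/-- Entrywise complex conjugation of a vector in `ℂⁿ`. -/
def conjVec {n : ℕ} (v : Fin n → ℂ) : Fin n → ℂ :=
  fun i => starRingEnd ℂ (v i)

/-- `σ^ε` on matrices, for `ε : ℤ/2` (written multiplicatively). -/
def sigmaPow {m n : ℕ} (ε : Multiplicative (ZMod 2)) (M : Matrix (Fin m) (Fin n) ℂ) :
    Matrix (Fin m) (Fin n) ℂ :=
  if ε = 1 then M else conjMat M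

/-- `σ^ε` on vectors. -/
def sigmaPowVec {n : ℕ} (ε : Multiplicative (ZMod 2)) (v : Fin n → ℂ) : Fin n → ℂ :=
  if ε = 1 then v else conjVec v

/-- A magnetic representation of the magnetic group `(G, φ)` on `ℂⁿ`:
`ρ (g * h) = ρ g * σ^(φ g) (ρ h)`. -/
def IsMagneticRep {G : Type*} [Group G] (φ : G →* Multiplicative (ZMod 2)) {n : ℕ}
    (ρ : G → Matrix.GeneralLinearGroup (Fin n) ℂ) : Prop :=
  ∀ g h : G, (ρ (g * h) : Matrix (Fin n) (Fin n) ℂ) =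
    (ρ g : Matrix (Fin n) (Fin n) ℂ) * sigmaPow (φ g) (ρ h : Matrix (Fin n) (Fin n) ℂ)

/-- A morphism of magnetic representations from `ρ₁` to `ρ₂`. -/
def IsMagMorphism {G : Type*} [Group G] (φ : G →* Multiplicative (ZMod 2)) {n m : ℕ}
    (ρ₁ : G → Matrix.GeneralLinearGroup (Fin n) ℂ)
    (ρ₂ : G → Matrix.GeneralLinearGroup (Fin m) ℂ)
    (T : Matrix (Fin m) (Fin n) ℂ) : Prop :=
  ∀ g : G, T * (ρ₁ g : Matrix (Fin n) (Fin n) ℂ) =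
    (ρ₂ g : Matrix (Fin m) (Fin m) ℂ) * sigmaPow (φ g) T

/-- A `ℂ`-subspace invariant under a magnetic representation. -/
def MagInvariant {G : Type*} [Group G] (φ : G →* Multiplicative (ZMod 2)) {n : ℕ}
    (ρ : G → Matrix.GeneralLinearGroup (Fin n) ℂ) (W : Submodule ℂ (Fin n → ℂ)) : Prop :=
  ∀ g : G, ∀ w ∈ W, (ρ g : Matrix (Fin n) (Fin n) ℂ).mulVec (sigmaPowVec (φ g) w) ∈ W

/-- An irreducible magnetic representation. -/
def IsIrredMagRep {G : Type*} [Group G] (φ : G →* Multiplicative (ZMod 2)) {n : ℕ}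
    (ρ : G → Matrix.GeneralLinearGroup (Fin n) ℂ) : Prop :=
  (⊥ : Submodule ℂ (Fin n → ℂ)) ≠ ⊤ ∧
    ∀ W : Submodule ℂ (Fin n → ℂ), MagInvariant φ ρ W → W = ⊥ ∨ W = ⊤

/-- Irreducibility of a classical (complex linear) representation given by
a family of invertible matrices. -/
def IsClassIrreducible {H : Type*} {n : ℕ}
    (ρ : H → Matrix.GeneralLinearGroup (Fin n) ℂ) : Prop :=
  (⊥ : Submodule ℂ (Fin n → ℂ)) ≠ ⊤ ∧
    ∀ W : Submodule ℂ (Fin n → ℂ),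
      (∀ h : H, ∀ w ∈ W, (ρ h : Matrix (Fin n) (Fin n) ℂ).mulVec w ∈ W) → W = ⊥ ∨ W = ⊤

theorem sq_mem {G : Type*} [Group G] (φ : G →* Multiplicative (ZMod 2)) (a : G) :
    a * a ∈ φ.ker := by
  have h2 : ∀ x : Multiplicative (ZMod 2), x * x = 1 := by decide
  simp [MonoidHom.mem_ker, _root_.map_mul, h2]

/-- `g ↦ a⁻¹ g a` as a map `G₀ → G₀` for `G₀ = ker φ`. -/
def kerConj {G : Type*} [Group G] (φ : G →* Multiplicative (ZMod 2)) (a : G) (g : φ.ker) :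
    φ.ker :=
  ⟨a⁻¹ * g * a, by
    have hg : φ g = 1 := g.2
    simp [MonoidHom.mem_ker, _root_.map_mul, map_inv, hg]⟩

/-- Entrywise conjugation as a map `GL(n, ℂ) → GL(n, ℂ)`. -/
def conjGL {n : ℕ} (A : Matrix.GeneralLinearGroup (Fin n) ℂ) :
    Matrix.GeneralLinearGroup (Fin n) ℂ :=
  Units.map (RingHom.toMonoidHom (RingHom.mapMatrix (starRingEnd ℂ))) A

theorem conjGL_conjGL {n : ℕ} (A : Matrix.GeneralLinearGroup (Fin n) ℂ) :
    conjGL (conjGL A) = A := by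
  apply Units.ext
  ext i j
  simp [conjGL]

theorem conjMat_mul {l m n : ℕ} (M : Matrix (Fin l) (Fin m) ℂ) (N : Matrix (Fin m) (Fin n) ℂ) :
    conjMat (M * N) = conjMat M * conjMat N := by
  ext i j
  simp [conjMat, Matrix.mul_apply, map_sum]

theorem conjMat_add {m n : ℕ} (M N : Matrix (Fin m) (Fin n) ℂ) :
    conjMat (M + N) = conjMat M + conjMat N := by
  ext i j
  simp [conjMat]

theorem sigmaPow_mul {l m n : ℕ} (ε : Multiplicative (ZMod 2))
    (M : Matrix (Fin l) (Fin m) ℂ) (N : Matrix (Fin m) (Fin n) ℂ) :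
    sigmaPow ε (M * N) = sigmaPow ε M * sigmaPow ε N := by
  unfold sigmaPow
  split
  · rfl
  · exact conjMat_mul M N

theorem sigmaPow_add {m n : ℕ} (ε : Multiplicative (ZMod 2))
    (M N : Matrix (Fin m) (Fin n) ℂ) :
    sigmaPow ε (M + N) = sigmaPow ε M + sigmaPow ε N := by
  unfold sigmaPow
  split
  · rfl
  · exact conjMat_add M N

/-- The `ℝ`-algebra of endomorphisms of a magnetic representation. -/
def MagEnd {G : Type*} [Group G] (φ : G →* Multiplicative (ZMod 2)) {n : ℕ}
    (ρ : G → Matrix.GeneralLinearGroup (Fin n) ℂ) :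
    Subalgebra ℝ (Matrix (Fin n) (Fin n) ℂ) where
  carrier := {T | ∀ g : G, T * (ρ g : Matrix (Fin n) (Fin n) ℂ) =
      (ρ g : Matrix (Fin n) (Fin n) ℂ) * sigmaPow (φ g) T}
  mul_mem' := by
    intro T S hT hS g
    rw [mul_assoc, hS g, ← mul_assoc, hT g, mul_assoc, sigmaPow_mul]
  add_mem' := by
    intro T S hT hS g
    rw [add_mul, hT g, hS g, sigmaPow_add, mul_add]
  algebraMap_mem' := by
    intro r g
    have hσ : sigmaPow (φ g) (algebraMap ℝ (Matrix (Fin n) (Fin n) ℂ) r) =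
        algebraMap ℝ (Matrix (Fin n) (Fin n) ℂ) r := by
      unfold sigmaPow conjMat
      split
      · rfl
      · ext i j
        simp [Matrix.algebraMap_matrix_apply, apply_ite (starRingEnd ℂ)]
    rw [hσ, Algebra.commutes]

/-- `(n+n) × (n+n)` block matrix built out of four `n × n` blocks. -/
def blocks {n : ℕ} (A B C D : Matrix (Fin n) (Fin n) ℂ) :
    Matrix (Fin (n + n)) (Fin (n + n)) ℂ :=
  Matrix.reindex finSumFinEquiv finSumFinEquiv (Matrix.fromBlocks A B C D)

/-- The matrix of the inclusion `ℂⁿ → ℂ^{n+n}` of the first block. -/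
def iotaMat (n : ℕ) : Matrix (Fin (n + n)) (Fin n) ℂ :=
  Matrix.reindex finSumFinEquiv (Equiv.refl (Fin n))
    (Matrix.fromRows (1 : Matrix (Fin n) (Fin n) ℂ) (0 : Matrix (Fin n) (Fin n) ℂ))


/-! ### Auxiliary infrastructure -/

section Aux

open Matrix

local notation "E" => finSumFinEquiv

variable {n : ℕ}

theorem conjMat_conjMat {m k : ℕ} (M : Matrix (Fin m) (Fin k) ℂ) : conjMat (conjMat M) = M := by
  ext i j; simp [conjMat]

theorem conjMat_zero {m k : ℕ} : conjMat (0 : Matrix (Fin m) (Fin k) ℂ) = 0 := by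
  ext i j; simp [conjMat]

theorem conjMat_one : conjMat (1 : Matrix (Fin n) (Fin n) ℂ) = 1 := by
  ext i j; simp [conjMat, Matrix.one_apply, apply_ite (starRingEnd ℂ)]

theorem conjMat_smul {m k : ℕ} (c : ℂ) (M : Matrix (Fin m) (Fin k) ℂ) :
    conjMat (c • M) = (starRingEnd ℂ c) • conjMat M := by
  ext i j; simp [conjMat]

theorem conjVec_add (x y : Fin n → ℂ) : conjVec (x + y) = conjVec x + conjVec y := by
  funext i; simp [conjVec]

theorem conjVec_zero : conjVec (0 : Fin n → ℂ) = 0 := by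
  funext i; simp [conjVec]

theorem conjVec_smul (c : ℂ) (x : Fin n → ℂ) :
    conjVec (c • x) = (starRingEnd ℂ c) • conjVec x := by
  funext i; simp [conjVec]

theorem conjVec_conjVec (x : Fin n → ℂ) : conjVec (conjVec x) = x := by
  funext i; simp [conjVec]

theorem conjVec_eq_zero {x : Fin n → ℂ} : conjVec x = 0 ↔ x = 0 := by
  constructor
  · intro h
    have := congrArg conjVec h
    rwa [conjVec_conjVec, conjVec_zero] at this
  · rintro rfl; exact conjVec_zero

theorem conjVec_mulVec {m k : ℕ} (M : Matrix (Fin m) (Fin k) ℂ) (v : Fin k → ℂ) :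
    conjVec (M *ᵥ v) = conjMat M *ᵥ conjVec v := by
  funext i
  simp [conjVec, conjMat, Matrix.mulVec, dotProduct, map_sum]

/-- The conjugate of a subspace. -/
def conjSubmodule (W : Submodule ℂ (Fin n → ℂ)) : Submodule ℂ (Fin n → ℂ) where
  carrier := {v | conjVec v ∈ W}
  add_mem' := by intro x y hx hy; simp only [Set.mem_setOf_eq, conjVec_add]; exact W.add_mem hx hy
  zero_mem' := by simp only [Set.mem_setOf_eq, conjVec_zero]; exact W.zero_mem
  smul_mem' := by
    intro c x hx; simp only [Set.mem_setOf_eq, conjVec_smul]; exact W.smul_mem _ hx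

theorem mem_conjSubmodule {W : Submodule ℂ (Fin n → ℂ)} {v : Fin n → ℂ} :
    v ∈ conjSubmodule W ↔ conjVec v ∈ W := Iff.rfl

theorem conjSubmodule_eq_bot {W : Submodule ℂ (Fin n → ℂ)} :
    conjSubmodule W = ⊥ → W = ⊥ := by
  intro h
  rw [Submodule.eq_bot_iff] at h ⊢
  intro x hx
  have hx' : conjVec x ∈ conjSubmodule W := by
    rw [mem_conjSubmodule, conjVec_conjVec]; exact hx
  have := h _ hx'
  rw [conjVec_eq_zero] at this; exact this

theorem conjSubmodule_eq_top {W : Submodule ℂ (Fin n → ℂ)} :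
    conjSubmodule W = ⊤ → W = ⊤ := by
  intro h
  rw [Submodule.eq_top_iff'] at h ⊢
  intro x
  have := h (conjVec x)
  rwa [mem_conjSubmodule, conjVec_conjVec] at this

theorem mulVec_ext {m k : ℕ} {M N : Matrix (Fin m) (Fin k) ℂ}
    (h : ∀ v, M *ᵥ v = N *ᵥ v) : M = N := by
  ext i j
  have := congrFun (h (Pi.single j 1)) i
  simpa [Matrix.mulVec_single] using this

/-! ### Block matrix lemmas -/

theorem blocks_apply_ll (A B C D : Matrix (Fin n) (Fin n) ℂ) (i j : Fin n) :
    blocks A B C D (E (Sum.inl i)) (E (Sum.inl j)) = A i j := by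
  simp only [blocks, Matrix.reindex_apply, Matrix.submatrix_apply, Equiv.symm_apply_apply,
    Matrix.fromBlocks_apply₁₁]

theorem blocks_apply_lr (A B C D : Matrix (Fin n) (Fin n) ℂ) (i j : Fin n) :
    blocks A B C D (E (Sum.inl i)) (E (Sum.inr j)) = B i j := by
  simp only [blocks, Matrix.reindex_apply, Matrix.submatrix_apply, Equiv.symm_apply_apply,
    Matrix.fromBlocks_apply₁₂]

theorem blocks_apply_rl (A B C D : Matrix (Fin n) (Fin n) ℂ) (i j : Fin n) :
    blocks A B C D (E (Sum.inr i)) (E (Sum.inl j)) = C i j := by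
  simp only [blocks, Matrix.reindex_apply, Matrix.submatrix_apply, Equiv.symm_apply_apply,
    Matrix.fromBlocks_apply₂₁]

theorem blocks_apply_rr (A B C D : Matrix (Fin n) (Fin n) ℂ) (i j : Fin n) :
    blocks A B C D (E (Sum.inr i)) (E (Sum.inr j)) = D i j := by
  simp only [blocks, Matrix.reindex_apply, Matrix.submatrix_apply, Equiv.symm_apply_apply,
    Matrix.fromBlocks_apply₂₂]

theorem blocks_inj {A B C D A' B' C' D' : Matrix (Fin n) (Fin n) ℂ}
    (h : blocks A B C D = blocks A' B' C' D') :
    A = A' ∧ B = B' ∧ C = C' ∧ D = D' := by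
  refine ⟨?_, ?_, ?_, ?_⟩ <;> ext i j
  · have := congrFun (congrFun h (E (Sum.inl i))) (E (Sum.inl j))
    rwa [blocks_apply_ll, blocks_apply_ll] at this
  · have := congrFun (congrFun h (E (Sum.inl i))) (E (Sum.inr j))
    rwa [blocks_apply_lr, blocks_apply_lr] at this
  · have := congrFun (congrFun h (E (Sum.inr i))) (E (Sum.inl j))
    rwa [blocks_apply_rl, blocks_apply_rl] at this
  · have := congrFun (congrFun h (E (Sum.inr i))) (E (Sum.inr j))
    rwa [blocks_apply_rr, blocks_apply_rr] at this

theorem eq_blocks (M : Matrix (Fin (n + n)) (Fin (n + n)) ℂ) :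
    M = blocks (fun i j => M (E (Sum.inl i)) (E (Sum.inl j)))
      (fun i j => M (E (Sum.inl i)) (E (Sum.inr j)))
      (fun i j => M (E (Sum.inr i)) (E (Sum.inl j)))
      (fun i j => M (E (Sum.inr i)) (E (Sum.inr j))) := by
  ext i j
  obtain ⟨s, rfl⟩ : ∃ s, i = E s := ⟨finSumFinEquiv.symm i, (Equiv.apply_symm_apply _ i).symm⟩
  obtain ⟨t, rfl⟩ : ∃ t, j = E t := ⟨finSumFinEquiv.symm j, (Equiv.apply_symm_apply _ j).symm⟩
  cases s <;> cases t
  · exact (blocks_apply_ll (fun i j => M (E (Sum.inl i)) (E (Sum.inl j))) (fun i j => M (E (Sum.inl i)) (E (Sum.inr j)))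
      (fun i j => M (E (Sum.inr i)) (E (Sum.inl j))) (fun i j => M (E (Sum.inr i)) (E (Sum.inr j))) _ _).symm
  · exact (blocks_apply_lr (fun i j => M (E (Sum.inl i)) (E (Sum.inl j))) (fun i j => M (E (Sum.inl i)) (E (Sum.inr j)))
      (fun i j => M (E (Sum.inr i)) (E (Sum.inl j))) (fun i j => M (E (Sum.inr i)) (E (Sum.inr j))) _ _).symm
  · exact (blocks_apply_rl (fun i j => M (E (Sum.inl i)) (E (Sum.inl j))) (fun i j => M (E (Sum.inl i)) (E (Sum.inr j)))
      (fun i j => M (E (Sum.inr i)) (E (Sum.inl j))) (fun i j => M (E (Sum.inr i)) (E (Sum.inr j))) _ _).symm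
  · exact (blocks_apply_rr (fun i j => M (E (Sum.inl i)) (E (Sum.inl j))) (fun i j => M (E (Sum.inl i)) (E (Sum.inr j)))
      (fun i j => M (E (Sum.inr i)) (E (Sum.inl j))) (fun i j => M (E (Sum.inr i)) (E (Sum.inr j))) _ _).symm

theorem blocks_mul (A B C D A' B' C' D' : Matrix (Fin n) (Fin n) ℂ) :
    blocks A B C D * blocks A' B' C' D' =
      blocks (A * A' + B * C') (A * B' + B * D') (C * A' + D * C') (C * B' + D * D') := by
  unfold blocks
  rw [← Matrix.reindexAlgEquiv_apply ℂ ℂ, ← Matrix.reindexAlgEquiv_apply ℂ ℂ,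
    ← Matrix.reindexAlgEquiv_apply ℂ ℂ, ← _root_.map_mul, Matrix.fromBlocks_multiply]

theorem blocks_one : blocks (1 : Matrix (Fin n) (Fin n) ℂ) 0 0 1 = 1 := by
  unfold blocks
  rw [Matrix.fromBlocks_one, ← Matrix.reindexAlgEquiv_apply ℂ ℂ, _root_.map_one]

theorem blocks_add (A B C D A' B' C' D' : Matrix (Fin n) (Fin n) ℂ) :
    blocks A B C D + blocks A' B' C' D' =
      blocks (A + A') (B + B') (C + C') (D + D') := by
  ext i j
  obtain ⟨s, rfl⟩ : ∃ s, i = E s := ⟨finSumFinEquiv.symm i, (Equiv.apply_symm_apply _ i).symm⟩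
  obtain ⟨t, rfl⟩ : ∃ t, j = E t := ⟨finSumFinEquiv.symm j, (Equiv.apply_symm_apply _ j).symm⟩
  cases s <;> cases t <;>
    simp only [Matrix.add_apply, blocks_apply_ll, blocks_apply_lr, blocks_apply_rl,
      blocks_apply_rr]

theorem blocks_smul (c : ℂ) (A B C D : Matrix (Fin n) (Fin n) ℂ) :
    c • blocks A B C D = blocks (c • A) (c • B) (c • C) (c • D) := by
  ext i j
  obtain ⟨s, rfl⟩ : ∃ s, i = E s := ⟨finSumFinEquiv.symm i, (Equiv.apply_symm_apply _ i).symm⟩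
  obtain ⟨t, rfl⟩ : ∃ t, j = E t := ⟨finSumFinEquiv.symm j, (Equiv.apply_symm_apply _ j).symm⟩
  cases s <;> cases t <;>
    simp only [Matrix.smul_apply, blocks_apply_ll, blocks_apply_lr, blocks_apply_rl,
      blocks_apply_rr]

theorem conjMat_blocks (A B C D : Matrix (Fin n) (Fin n) ℂ) :
    conjMat (blocks A B C D) = blocks (conjMat A) (conjMat B) (conjMat C) (conjMat D) := by
  ext i j
  obtain ⟨s, rfl⟩ : ∃ s, i = E s := ⟨finSumFinEquiv.symm i, (Equiv.apply_symm_apply _ i).symm⟩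
  obtain ⟨t, rfl⟩ : ∃ t, j = E t := ⟨finSumFinEquiv.symm j, (Equiv.apply_symm_apply _ j).symm⟩
  cases s <;> cases t <;>
    simp only [conjMat, Matrix.map_apply, blocks_apply_ll, blocks_apply_lr, blocks_apply_rl,
      blocks_apply_rr]

/-! ### Vector concatenation -/

/-- Concatenation of two vectors in `ℂⁿ` into a vector in `ℂ^{n+n}`. -/
def vcat (x y : Fin n → ℂ) : Fin (n + n) → ℂ := fun i => Sum.elim x y (finSumFinEquiv.symm i)

theorem vcat_applyE (x y : Fin n → ℂ) (s : Fin n ⊕ Fin n) :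
    vcat x y (E s) = Sum.elim x y s := by
  show Sum.elim x y (finSumFinEquiv.symm (finSumFinEquiv s)) = Sum.elim x y s
  rw [Equiv.symm_apply_apply]

theorem funextE {f g : Fin (n + n) → ℂ} (h : ∀ s, f (E s) = g (E s)) : f = g := by
  funext i
  have := h (finSumFinEquiv.symm i)
  rwa [Equiv.apply_symm_apply] at this

theorem vcat_inl (x y : Fin n → ℂ) (i : Fin n) : vcat x y (E (Sum.inl i)) = x i := by
  rw [vcat_applyE]; rfl

theorem vcat_inr (x y : Fin n → ℂ) (i : Fin n) : vcat x y (E (Sum.inr i)) = y i := by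
  rw [vcat_applyE]; rfl

theorem vcat_eq (v : Fin (n + n) → ℂ) :
    vcat (fun i => v (E (Sum.inl i))) (fun i => v (E (Sum.inr i))) = v := by
  apply funextE
  intro s
  rw [vcat_applyE]
  cases s <;> rfl

theorem vcat_add (x y x' y' : Fin n → ℂ) :
    vcat x y + vcat x' y' = vcat (x + x') (y + y') := by
  apply funextE
  intro s
  rw [Pi.add_apply, vcat_applyE, vcat_applyE, vcat_applyE]
  cases s <;> simp

theorem vcat_smul (c : ℂ) (x y : Fin n → ℂ) :
    c • vcat x y = vcat (c • x) (c • y) := by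
  apply funextE
  intro s
  rw [Pi.smul_apply, vcat_applyE, vcat_applyE]
  cases s <;> simp

theorem vcat_zero : vcat (0 : Fin n → ℂ) 0 = 0 := by
  apply funextE
  intro s
  rw [vcat_applyE]
  cases s <;> rfl

theorem conjVec_vcat (x y : Fin n → ℂ) :
    conjVec (vcat x y) = vcat (conjVec x) (conjVec y) := by
  apply funextE
  intro s
  show starRingEnd ℂ (vcat x y (E s)) = _
  rw [vcat_applyE, vcat_applyE]
  cases s <;> rfl

theorem vcat_eq_zero {x y : Fin n → ℂ} (h : vcat x y = 0) : x = 0 ∧ y = 0 := by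
  constructor <;> funext i
  · have := congrFun h (E (Sum.inl i)); rwa [vcat_inl] at this
  · have := congrFun h (E (Sum.inr i)); rwa [vcat_inr] at this

theorem blocks_mulVec (A B C D : Matrix (Fin n) (Fin n) ℂ) (x y : Fin n → ℂ) :
    blocks A B C D *ᵥ vcat x y = vcat (A *ᵥ x + B *ᵥ y) (C *ᵥ x + D *ᵥ y) := by
  unfold blocks
  rw [Matrix.reindex_apply, Matrix.submatrix_mulVec_equiv]
  have hv : (vcat x y : Fin (n + n) → ℂ) ∘ ⇑(finSumFinEquiv.symm.symm) = Sum.elim x y := by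
    funext s
    rw [Function.comp_apply, Equiv.symm_symm, vcat_applyE]
  rw [hv, Matrix.fromBlocks_mulVec]
  rfl

end Aux
section Aux2

open Matrix

variable {n : ℕ}

theorem eq_zero_of_mulVec_zero {m k : ℕ} {M : Matrix (Fin m) (Fin k) ℂ}
    (h : ∀ v, M *ᵥ v = 0) : M = 0 := by
  apply mulVec_ext
  intro v
  rw [h v, Matrix.zero_mulVec]

theorem unit_swap (u : (Matrix (Fin n) (Fin n) ℂ)ˣ) (x y : Matrix (Fin n) (Fin n) ℂ)
    (h : u.val * x = y * u.val) : u⁻¹.val * y = x * u⁻¹.val := by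
  calc u⁻¹.val * y = u⁻¹.val * (y * u.val) * u⁻¹.val := by
        rw [mul_assoc, mul_assoc y, Units.mul_inv, mul_one]
    _ = u⁻¹.val * (u.val * x) * u⁻¹.val := by rw [h]
    _ = x * u⁻¹.val := by rw [← mul_assoc, Units.inv_mul, one_mul]

theorem unit_mulVec_eq_zero {u : (Matrix (Fin n) (Fin n) ℂ)ˣ} {v : Fin n → ℂ}
    (h : (↑u : Matrix (Fin n) (Fin n) ℂ) *ᵥ v = 0) : v = 0 := by
  have : (↑u⁻¹ : Matrix (Fin n) (Fin n) ℂ) *ᵥ ((↑u : Matrix (Fin n) (Fin n) ℂ) *ᵥ v) = 0 := by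
    rw [h, Matrix.mulVec_zero]
  rwa [Matrix.mulVec_mulVec, Units.inv_mul, Matrix.one_mulVec] at this

/-- Schur's lemma, part I: a matrix commuting with an irreducible family is scalar. -/
theorem schur_scalar {H : Type*} (ρf : H → Matrix (Fin n) (Fin n) ℂ)
    (hn : (⊥ : Submodule ℂ (Fin n → ℂ)) ≠ ⊤)
    (hirr : ∀ W : Submodule ℂ (Fin n → ℂ),
      (∀ h : H, ∀ w ∈ W, ρf h *ᵥ w ∈ W) → W = ⊥ ∨ W = ⊤)
    (A : Matrix (Fin n) (Fin n) ℂ) (hA : ∀ h : H, A * ρf h = ρf h * A) :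
    ∃ c : ℂ, A = c • 1 := by
  have hn0 : n ≠ 0 := by
    rintro rfl
    exact hn (Subsingleton.elim _ _)
  haveI : NeZero n := ⟨hn0⟩
  haveI : Nontrivial (Fin n → ℂ) := by infer_instance
  obtain ⟨c, hc⟩ := Module.End.exists_eigenvalue (Matrix.toLinAlgEquiv' A)
  refine ⟨c, ?_⟩
  obtain ⟨v, hv⟩ := hc.exists_hasEigenvector
  have hv0 : v ≠ 0 := hv.right
  have hveq : A *ᵥ v = c • v := by
    have := hv.apply_eq_smul
    rwa [Matrix.toLinAlgEquiv'_apply] at this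
  set W : Submodule ℂ (Fin n → ℂ) := LinearMap.ker (Matrix.toLinAlgEquiv' (A - c • 1)) with hW
  have hmem : ∀ w, w ∈ W ↔ (A - c • 1) *ᵥ w = 0 := by
    intro w
    rw [hW, LinearMap.mem_ker, Matrix.toLinAlgEquiv'_apply]
  have hcomm : ∀ h : H, (A - c • 1) * ρf h = ρf h * (A - c • 1) := by
    intro h
    rw [sub_mul, mul_sub, hA h, smul_mul_assoc, one_mul, mul_smul_comm, mul_one]
  have hWinv : ∀ h : H, ∀ w ∈ W, ρf h *ᵥ w ∈ W := by
    intro h w hw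
    rw [hmem] at hw ⊢
    rw [Matrix.mulVec_mulVec, hcomm h, ← Matrix.mulVec_mulVec, hw, Matrix.mulVec_zero]
  have hvW : v ∈ W := by
    rw [hmem, Matrix.sub_mulVec, hveq, Matrix.smul_mulVec, Matrix.one_mulVec, sub_self]
  rcases hirr W hWinv with hbot | htop
  · exfalso
    rw [hbot] at hvW
    exact hv0 (Submodule.mem_bot ℂ |>.mp hvW)
  · have : A - c • 1 = 0 := by
      apply eq_zero_of_mulVec_zero
      intro w
      have : w ∈ W := htop ▸ Submodule.mem_top
      rwa [hmem] at this
    exact sub_eq_zero.mp this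

/-- Schur's lemma, part II: an intertwiner between irreducible families is zero or invertible. -/
theorem schur_hom {H : Type*} (ρ₁ ρ₂ : H → Matrix (Fin n) (Fin n) ℂ)
    (hirr1 : ∀ W : Submodule ℂ (Fin n → ℂ),
      (∀ h : H, ∀ w ∈ W, ρ₁ h *ᵥ w ∈ W) → W = ⊥ ∨ W = ⊤)
    (hirr2 : ∀ W : Submodule ℂ (Fin n → ℂ),
      (∀ h : H, ∀ w ∈ W, ρ₂ h *ᵥ w ∈ W) → W = ⊥ ∨ W = ⊤)
    (B : Matrix (Fin n) (Fin n) ℂ) (hB : ∀ h : H, B * ρ₁ h = ρ₂ h * B) :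
    B = 0 ∨ IsUnit B := by
  by_cases hB0 : B = 0
  · exact Or.inl hB0
  right
  set f : (Fin n → ℂ) →ₗ[ℂ] (Fin n → ℂ) := Matrix.toLinAlgEquiv' B with hf
  have hfapp : ∀ v, f v = B *ᵥ v := fun v => Matrix.toLinAlgEquiv'_apply B v
  -- kernel is invariant under ρ₁
  have hkerinv : ∀ h : H, ∀ w ∈ LinearMap.ker f, ρ₁ h *ᵥ w ∈ LinearMap.ker f := by
    intro h w hw
    rw [LinearMap.mem_ker, hfapp] at hw ⊢
    rw [Matrix.mulVec_mulVec, hB h, ← Matrix.mulVec_mulVec, hw, Matrix.mulVec_zero]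
  have hker : LinearMap.ker f = ⊥ := by
    rcases hirr1 (LinearMap.ker f) hkerinv with h | h
    · exact h
    · exfalso
      apply hB0
      apply eq_zero_of_mulVec_zero
      intro v
      have : v ∈ LinearMap.ker f := h ▸ Submodule.mem_top
      rw [LinearMap.mem_ker, hfapp] at this
      exact this
  -- range is invariant under ρ₂
  have hrnginv : ∀ h : H, ∀ w ∈ LinearMap.range f, ρ₂ h *ᵥ w ∈ LinearMap.range f := by
    rintro h w ⟨v, rfl⟩
    refine ⟨ρ₁ h *ᵥ v, ?_⟩
    rw [hfapp, hfapp, Matrix.mulVec_mulVec, hB h, ← Matrix.mulVec_mulVec]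
  have hrange : LinearMap.range f = ⊤ := by
    rcases hirr2 (LinearMap.range f) hrnginv with h | h
    · exfalso
      apply hB0
      apply eq_zero_of_mulVec_zero
      intro v
      have : f v ∈ LinearMap.range f := LinearMap.mem_range_self f v
      rw [h, Submodule.mem_bot] at this
      rwa [hfapp] at this
    · exact h
  have hunit : IsUnit f := (LinearMap.isUnit_iff_ker_eq_bot f).mpr hker
  have : IsUnit (Matrix.toLinAlgEquiv'.symm f) := hunit.map (Matrix.toLinAlgEquiv'.symm : _ ≃ₐ[ℂ] _)
  rwa [hf, AlgEquiv.symm_apply_apply] at this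

end Aux2
section Aux3

open Matrix

variable {n : ℕ}

theorem blocks_zero : blocks (0 : Matrix (Fin n) (Fin n) ℂ) 0 0 0 = 0 := by
  ext i j
  obtain ⟨s, rfl⟩ : ∃ s, i = finSumFinEquiv s :=
    ⟨finSumFinEquiv.symm i, (Equiv.apply_symm_apply _ i).symm⟩
  obtain ⟨t, rfl⟩ : ∃ t, j = finSumFinEquiv t :=
    ⟨finSumFinEquiv.symm j, (Equiv.apply_symm_apply _ j).symm⟩
  cases s <;> cases t <;>
    simp only [Matrix.zero_apply, blocks_apply_ll, blocks_apply_lr, blocks_apply_rl,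
      blocks_apply_rr]

theorem kerConj_surjective {G : Type*} [Group G] (φ : G →* Multiplicative (ZMod 2)) (a : G) :
    Function.Surjective (kerConj φ a) := by
  intro h
  have hmem : a * (h : G) * a⁻¹ ∈ φ.ker := by
    have hh : φ (h : G) = 1 := h.2
    simp [MonoidHom.mem_ker, _root_.map_mul, map_inv, hh]
  refine ⟨⟨a * (h : G) * a⁻¹, hmem⟩, ?_⟩
  apply Subtype.ext
  show a⁻¹ * (a * (h : G) * a⁻¹) * a = (h : G)
  group

theorem star_irred {G : Type*} [Group G] (φ : G →* Multiplicative (ZMod 2)) (a : G)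
    (ρ : φ.ker → Matrix.GeneralLinearGroup (Fin n) ℂ)
    (hirr : ∀ W : Submodule ℂ (Fin n → ℂ),
      (∀ g : φ.ker, ∀ w ∈ W, (ρ g : Matrix (Fin n) (Fin n) ℂ) *ᵥ w ∈ W) → W = ⊥ ∨ W = ⊤)
    (W : Submodule ℂ (Fin n → ℂ))
    (hW : ∀ g : φ.ker, ∀ w ∈ W,
      conjMat (ρ (kerConj φ a g) : Matrix (Fin n) (Fin n) ℂ) *ᵥ w ∈ W) :
    W = ⊥ ∨ W = ⊤ := by
  have h2 : ∀ g : φ.ker, ∀ w ∈ conjSubmodule W,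
      (ρ g : Matrix (Fin n) (Fin n) ℂ) *ᵥ w ∈ conjSubmodule W := by
    intro g w hw
    obtain ⟨g', rfl⟩ := kerConj_surjective φ a g
    rw [mem_conjSubmodule] at hw ⊢
    have := hW g' _ hw
    rwa [← conjVec_mulVec] at this
  rcases hirr _ h2 with h | h
  · exact Or.inl (conjSubmodule_eq_bot h)
  · exact Or.inr (conjSubmodule_eq_top h)

/-- The candidate endomorphism algebra, as a map from `ℂ`. -/
def psi (n : ℕ) : ℂ →ₐ[ℝ] Matrix (Fin (n + n)) (Fin (n + n)) ℂ where
  toFun c := blocks (c • 1) 0 0 (starRingEnd ℂ c • 1)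
  map_one' := by
    show blocks ((1 : ℂ) • 1) 0 0 (starRingEnd ℂ 1 • 1) = 1
    rw [one_smul, _root_.map_one, one_smul, blocks_one]
  map_mul' c d := by
    show blocks ((c * d) • 1) 0 0 (starRingEnd ℂ (c * d) • 1) =
      blocks (c • 1) 0 0 (starRingEnd ℂ c • 1) * blocks (d • 1) 0 0 (starRingEnd ℂ d • 1)
    rw [blocks_mul]
    simp only [Matrix.mul_zero, Matrix.zero_mul, add_zero, zero_add, _root_.map_mul]
    rw [smul_mul_assoc, one_mul, smul_smul, smul_mul_assoc, one_mul, smul_smul]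
  map_zero' := by
    show blocks ((0 : ℂ) • 1) 0 0 (starRingEnd ℂ 0 • 1) = 0
    rw [zero_smul, _root_.map_zero, zero_smul, blocks_zero]
  map_add' c d := by
    show blocks ((c + d) • 1) 0 0 (starRingEnd ℂ (c + d) • 1) =
      blocks (c • 1) 0 0 (starRingEnd ℂ c • 1) + blocks (d • 1) 0 0 (starRingEnd ℂ d • 1)
    rw [blocks_add]
    simp only [add_smul, _root_.map_add, add_zero]
  commutes' r := by
    show blocks ((algebraMap ℝ ℂ r) • 1) 0 0 (starRingEnd ℂ (algebraMap ℝ ℂ r) • 1) = _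
    have h1 : starRingEnd ℂ (algebraMap ℝ ℂ r) = algebraMap ℝ ℂ r := by
      simp [Complex.conj_ofReal]
    rw [h1]
    have h2 : algebraMap ℝ (Matrix (Fin (n + n)) (Fin (n + n)) ℂ) r =
        (algebraMap ℝ ℂ r) • (1 : Matrix (Fin (n + n)) (Fin (n + n)) ℂ) := by
      rw [Algebra.algebraMap_eq_smul_one, algebraMap_smul]
    rw [h2, ← blocks_one, blocks_smul, smul_zero]

theorem psi_apply (n : ℕ) (c : ℂ) :
    psi n c = blocks (c • 1) 0 0 (starRingEnd ℂ c • 1) := rfl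

theorem psi_injective (n : ℕ) (hn : n ≠ 0) : Function.Injective (psi n) := by
  intro c d h
  have hne : Nonempty (Fin n) := ⟨⟨0, Nat.pos_of_ne_zero hn⟩⟩
  obtain ⟨i⟩ := hne
  have := congrFun (congrFun (congrArg (fun M => M) h) (finSumFinEquiv (Sum.inl i)))
    (finSumFinEquiv (Sum.inl i))
  have h2 : (blocks ((c : ℂ) • 1) 0 0 (starRingEnd ℂ c • 1) :
      Matrix (Fin (n + n)) (Fin (n + n)) ℂ) = blocks ((d : ℂ) • 1) 0 0 (starRingEnd ℂ d • 1) := h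
  obtain ⟨h3, -, -, -⟩ := blocks_inj h2
  have := congrFun (congrFun h3 i) i
  simpa [Matrix.one_apply] using this

end Aux3
theorem stmt16 {G : Type*} [Group G] [Finite G]
    (φ : G →* Multiplicative (ZMod 2)) (hφ : Function.Surjective φ)
    (a : G) (ha : a ∉ φ.ker) {n : ℕ}
    (ρ : φ.ker →* Matrix.GeneralLinearGroup (Fin n) ℂ)
    (hirr : IsClassIrreducible fun g : φ.ker => ρ g)
    (hnoniso : ¬∃ S : Matrix.GeneralLinearGroup (Fin n) ℂ,
      ∀ g : φ.ker,
        (S : Matrix (Fin n) (Fin n) ℂ) * conjMat (ρ (kerConj φ a g) : Matrix (Fin n) (Fin n) ℂ) =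
          (ρ g : Matrix (Fin n) (Fin n) ℂ) * (S : Matrix (Fin n) (Fin n) ℂ))
    (ρt : G → Matrix.GeneralLinearGroup (Fin (n + n)) ℂ)
    (hρt : IsMagneticRep φ ρt)
    (hρt0 : ∀ g : φ.ker, (ρt g : Matrix (Fin (n + n)) (Fin (n + n)) ℂ) =
      blocks (ρ g : Matrix (Fin n) (Fin n) ℂ) 0 0
        (conjMat (ρ (kerConj φ a g) : Matrix (Fin n) (Fin n) ℂ)))
    (hρta : (ρt a : Matrix (Fin (n + n)) (Fin (n + n)) ℂ) =
      blocks 0 (ρ ⟨a * a, sq_mem φ a⟩ : Matrix (Fin n) (Fin n) ℂ) 1 0) :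
    IsIrredMagRep φ ρt ∧ Nonempty (MagEnd φ ρt ≃ₐ[ℝ] ℂ) := by
  classical
  -- basic setup
  have hn0 : n ≠ 0 := by rintro rfl; exact hirr.1 (Subsingleton.elim _ _)
  have hφa : φ a ≠ 1 := fun h => ha (MonoidHom.mem_ker.mpr h)
  have hφg : ∀ g : φ.ker, φ (g : G) = 1 := fun g => g.2
  have hsig1 : ∀ g : G, φ g = 1 → ∀ M : Matrix (Fin (n + n)) (Fin (n + n)) ℂ,
      sigmaPow (φ g) M = M := by
    intro g hg M; rw [hg]; simp [sigmaPow]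
  have hsigc : ∀ g : G, φ g ≠ 1 → ∀ M : Matrix (Fin (n + n)) (Fin (n + n)) ℂ,
      sigmaPow (φ g) M = conjMat M := by
    intro g hg M; unfold sigmaPow; rw [if_neg hg]
  have hsigv1 : ∀ g : G, φ g = 1 → ∀ w : Fin (n + n) → ℂ,
      sigmaPowVec (φ g) w = w := by
    intro g hg w; rw [hg]; simp [sigmaPowVec]
  have hsigvc : ∀ g : G, φ g ≠ 1 → ∀ w : Fin (n + n) → ℂ,
      sigmaPowVec (φ g) w = conjVec w := by
    intro g hg w; unfold sigmaPowVec; rw [if_neg hg]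
  set P : Matrix (Fin n) (Fin n) ℂ :=
    (ρ ⟨a * a, sq_mem φ a⟩ : Matrix (Fin n) (Fin n) ℂ) with hPdef
  set ρs : φ.ker → Matrix (Fin n) (Fin n) ℂ :=
    fun g => conjMat (ρ (kerConj φ a g) : Matrix (Fin n) (Fin n) ℂ) with hρsdef
  have hirr' : ∀ W : Submodule ℂ (Fin n → ℂ),
      (∀ g : φ.ker, ∀ w ∈ W, (ρ g : Matrix (Fin n) (Fin n) ℂ) *ᵥ w ∈ W) → W = ⊥ ∨ W = ⊤ :=
    hirr.2
  have hirrs : ∀ W : Submodule ℂ (Fin n → ℂ),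
      (∀ g : φ.ker, ∀ w ∈ W, ρs g *ᵥ w ∈ W) → W = ⊥ ∨ W = ⊤ :=
    fun W h => star_irred φ a (fun g => ρ g) hirr' W h
  -- structure of ρt away from the kernel
  have hρtg : ∀ g : G, φ g ≠ 1 → ∃ h₀ : φ.ker,
      (ρt g : Matrix (Fin (n + n)) (Fin (n + n)) ℂ) =
        blocks 0 ((ρ h₀ : Matrix (Fin n) (Fin n) ℂ) * P) (ρs h₀) 0 := by
    intro g hg
    have hmem : g * a⁻¹ ∈ φ.ker := by
      rw [MonoidHom.mem_ker, _root_.map_mul, map_inv]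
      revert hφa hg
      generalize φ g = x; generalize φ a = y
      revert x y; decide
    refine ⟨⟨g * a⁻¹, hmem⟩, ?_⟩
    have h0 : (ρt ((g * a⁻¹) * a) : Matrix (Fin (n + n)) (Fin (n + n)) ℂ) =
        (ρt (g * a⁻¹) : Matrix (Fin (n + n)) (Fin (n + n)) ℂ) *
          sigmaPow (φ (g * a⁻¹)) (ρt a : Matrix (Fin (n + n)) (Fin (n + n)) ℂ) :=
      hρt (g * a⁻¹) a
    rw [inv_mul_cancel_right] at h0
    have h1 : (ρt (g * a⁻¹) : Matrix (Fin (n + n)) (Fin (n + n)) ℂ) =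
        blocks (ρ ⟨g * a⁻¹, hmem⟩ : Matrix (Fin n) (Fin n) ℂ) 0 0 (ρs ⟨g * a⁻¹, hmem⟩) :=
      hρt0 ⟨g * a⁻¹, hmem⟩
    have h2 : φ (g * a⁻¹) = 1 := hmem
    rw [h0, h1, hsig1 _ h2, hρta, blocks_mul]
    simp
  -- no nonzero intertwiner in either direction
  have hhomzero : ∀ B : Matrix (Fin n) (Fin n) ℂ,
      (∀ g : φ.ker, B * ρs g = (ρ g : Matrix (Fin n) (Fin n) ℂ) * B) → B = 0 := by
    intro B hB
    rcases schur_hom ρs (fun g => (ρ g : Matrix (Fin n) (Fin n) ℂ)) hirrs hirr' B hB with h | h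
    · exact h
    · exact absurd ⟨h.unit, fun g => by rw [h.unit_spec]; exact hB g⟩ hnoniso
  have hhomzero' : ∀ C : Matrix (Fin n) (Fin n) ℂ,
      (∀ g : φ.ker, C * (ρ g : Matrix (Fin n) (Fin n) ℂ) = ρs g * C) → C = 0 := by
    intro C hC
    rcases schur_hom (fun g => (ρ g : Matrix (Fin n) (Fin n) ℂ)) ρs hirr' hirrs C hC with h | h
    · exact h
    · exfalso
      refine hnoniso ⟨h.unit⁻¹, fun g => ?_⟩
      exact unit_swap h.unit _ _ (by rw [h.unit_spec]; exact hC g)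
  -- characterisation of the endomorphism algebra
  have hend : ∀ T : Matrix (Fin (n + n)) (Fin (n + n)) ℂ,
      (∀ g : G, T * (ρt g : Matrix (Fin (n + n)) (Fin (n + n)) ℂ) =
        (ρt g : Matrix (Fin (n + n)) (Fin (n + n)) ℂ) * sigmaPow (φ g) T) →
      ∃ c : ℂ, T = psi n c := by
    intro T hT
    obtain ⟨A, B, C, D, hTb⟩ :
        ∃ A B C D : Matrix (Fin n) (Fin n) ℂ, T = blocks A B C D := ⟨_, _, _, _, eq_blocks T⟩
    have hrel0 : ∀ g : φ.ker,
        A * (ρ g : Matrix (Fin n) (Fin n) ℂ) = (ρ g : Matrix (Fin n) (Fin n) ℂ) * A ∧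
        B * ρs g = (ρ g : Matrix (Fin n) (Fin n) ℂ) * B ∧
        C * (ρ g : Matrix (Fin n) (Fin n) ℂ) = ρs g * C ∧
        D * ρs g = ρs g * D := by
      intro g
      have h := hT (g : G)
      rw [hsig1 _ (hφg g), hρt0 g, hTb, blocks_mul, blocks_mul] at h
      simp only [Matrix.mul_zero, Matrix.zero_mul, add_zero, zero_add] at h
      exact blocks_inj h
    have hB0 : B = 0 := hhomzero B (fun g => (hrel0 g).2.1)
    have hC0 : C = 0 := hhomzero' C (fun g => (hrel0 g).2.2.1)
    obtain ⟨c, hc⟩ := schur_scalar (fun g : φ.ker => (ρ g : Matrix (Fin n) (Fin n) ℂ))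
      hirr.1 hirr' A (fun g => (hrel0 g).1)
    obtain ⟨d, hd⟩ := schur_scalar ρs hirr.1 hirrs D (fun g => (hrel0 g).2.2.2)
    have ha' := hT a
    rw [hsigc _ hφa, hρta, hTb, hB0, hC0, conjMat_blocks, conjMat_zero,
      blocks_mul, blocks_mul] at ha'
    simp only [Matrix.mul_zero, Matrix.zero_mul, add_zero, zero_add, Matrix.mul_one,
      Matrix.one_mul] at ha'
    obtain ⟨-, -, h3, -⟩ := blocks_inj ha'
    -- h3 : D = conjMat A
    rw [hc, hd, conjMat_smul, conjMat_one] at h3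
    have hd_eq : d = starRingEnd ℂ c := by
      have i : Fin n := ⟨0, Nat.pos_of_ne_zero hn0⟩
      have h4 := congrFun (congrFun h3 i) i
      simpa [Matrix.one_apply] using h4
    exact ⟨c, by rw [hTb, hB0, hC0, hc, hd, hd_eq, psi_apply]⟩
  -- membership of psi in the endomorphism algebra
  have hmem : ∀ c : ℂ, ∀ g : G,
      psi n c * (ρt g : Matrix (Fin (n + n)) (Fin (n + n)) ℂ) =
        (ρt g : Matrix (Fin (n + n)) (Fin (n + n)) ℂ) * sigmaPow (φ g) (psi n c) := by
    intro c g
    by_cases hg : φ g = 1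
    · have hgk : g ∈ φ.ker := MonoidHom.mem_ker.mpr hg
      have h0 : (ρt g : Matrix (Fin (n + n)) (Fin (n + n)) ℂ) =
          blocks (ρ ⟨g, hgk⟩ : Matrix (Fin n) (Fin n) ℂ) 0 0 (ρs ⟨g, hgk⟩) := hρt0 ⟨g, hgk⟩
      rw [hsig1 _ hg, h0, psi_apply, blocks_mul, blocks_mul]
      simp only [Matrix.mul_zero, Matrix.zero_mul, add_zero, zero_add]
      rw [smul_mul_assoc, one_mul, mul_smul_comm, mul_one, smul_mul_assoc, one_mul,
        mul_smul_comm, mul_one]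
    · obtain ⟨h₀, hb⟩ := hρtg g hg
      rw [hsigc _ hg, hb, psi_apply, conjMat_blocks, conjMat_zero, conjMat_smul, conjMat_one,
        conjMat_smul, conjMat_one, Complex.conj_conj, blocks_mul, blocks_mul]
      simp only [Matrix.mul_zero, Matrix.zero_mul, add_zero, zero_add]
      rw [smul_mul_assoc, one_mul, mul_smul_comm, mul_one, smul_mul_assoc, one_mul,
        mul_smul_comm, mul_one]
  -- the algebra isomorphism
  have hmem' : ∀ c : ℂ, psi n c ∈ MagEnd φ ρt := fun c g => hmem c g
  let Ψ : ℂ →ₐ[ℝ] MagEnd φ ρt := (psi n).codRestrict (MagEnd φ ρt) hmem'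
  have hinj : Function.Injective Ψ := by
    intro c d h
    exact psi_injective n hn0 (congrArg Subtype.val h)
  have hsurj : Function.Surjective Ψ := by
    rintro ⟨T, hT⟩
    obtain ⟨c, hc⟩ := hend T hT
    exact ⟨c, Subtype.ext hc.symm⟩
  -- irreducibility
  have hIrr : IsIrredMagRep φ ρt := by
    constructor
    · intro h
      have h1 : (fun _ => (1 : ℂ) : Fin (n + n) → ℂ) ∈
          (⊥ : Submodule ℂ (Fin (n + n) → ℂ)) := by rw [h]; trivial
      have h2 := (Submodule.mem_bot ℂ).mp h1
      have h3 := congrFun h2 ⟨0, by omega⟩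
      simp at h3
    · intro W hW
      have hWk : ∀ g : φ.ker, ∀ w ∈ W,
          blocks (ρ g : Matrix (Fin n) (Fin n) ℂ) 0 0 (ρs g) *ᵥ w ∈ W := by
        intro g w hw
        have h0 : (ρt (g : G) : Matrix (Fin (n + n)) (Fin (n + n)) ℂ) =
            blocks (ρ g : Matrix (Fin n) (Fin n) ℂ) 0 0 (ρs g) := hρt0 g
        have h1 := hW (g : G) w hw
        rwa [hsigv1 _ (hφg g), h0] at h1
      have hWa : ∀ w ∈ W, blocks 0 P 1 0 *ᵥ conjVec w ∈ W := by
        intro w hw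
        have h1 := hW a w hw
        rwa [hsigvc _ hφa, hρta] at h1
      by_cases hWbot : W = ⊥
      · exact Or.inl hWbot
      right
      set L1 : (Fin (n + n) → ℂ) →ₗ[ℂ] (Fin n → ℂ) :=
        LinearMap.funLeft ℂ ℂ (fun i : Fin n => finSumFinEquiv (Sum.inl i)) with hL1def
      set L2 : (Fin (n + n) → ℂ) →ₗ[ℂ] (Fin n → ℂ) :=
        LinearMap.funLeft ℂ ℂ (fun i : Fin n => finSumFinEquiv (Sum.inr i)) with hL2def
      have hL1v : ∀ x y : Fin n → ℂ, L1 (vcat x y) = x := by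
        intro x y; funext i; exact vcat_inl x y i
      have hL2v : ∀ x y : Fin n → ℂ, L2 (vcat x y) = y := by
        intro x y; funext i; exact vcat_inr x y i
      have hvL : ∀ v : Fin (n + n) → ℂ, vcat (L1 v) (L2 v) = v := fun v => vcat_eq v
      let J1 : (Fin n → ℂ) →ₗ[ℂ] (Fin (n + n) → ℂ) :=
        { toFun := fun x => vcat x 0
          map_add' := fun x y => by rw [vcat_add, add_zero]
          map_smul' := fun c x => by
            simp only [RingHom.id_apply]; rw [vcat_smul, smul_zero] }
      let J2 : (Fin n → ℂ) →ₗ[ℂ] (Fin (n + n) → ℂ) :=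
        { toFun := fun y => vcat 0 y
          map_add' := fun x y => by rw [vcat_add, add_zero]
          map_smul' := fun c x => by
            simp only [RingHom.id_apply]; rw [vcat_smul, smul_zero] }
      have hblockv : ∀ (X Y : Matrix (Fin n) (Fin n) ℂ) (w : Fin (n + n) → ℂ),
          blocks X 0 0 Y *ᵥ w = vcat (X *ᵥ L1 w) (Y *ᵥ L2 w) := by
        intro X Y w
        conv_lhs => rw [← hvL w]
        rw [blocks_mulVec]
        simp only [Matrix.zero_mulVec, add_zero, zero_add]
      have hblockva : ∀ w : Fin (n + n) → ℂ,
          blocks 0 P 1 0 *ᵥ conjVec w = vcat (P *ᵥ conjVec (L2 w)) (conjVec (L1 w)) := by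
        intro w
        conv_lhs => rw [← hvL w]
        rw [conjVec_vcat, blocks_mulVec]
        simp only [Matrix.zero_mulVec, Matrix.one_mulVec, add_zero, zero_add]
      -- invariance of the components
      have hK1inv : ∀ g : φ.ker, ∀ x ∈ W.comap J1,
          (ρ g : Matrix (Fin n) (Fin n) ℂ) *ᵥ x ∈ W.comap J1 := by
        intro g x hx
        rw [Submodule.mem_comap] at hx ⊢
        have hx' : vcat x 0 ∈ W := hx
        show vcat ((ρ g : Matrix (Fin n) (Fin n) ℂ) *ᵥ x) 0 ∈ W
        have h1 := hWk g _ hx'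
        rw [hblockv, hL1v, hL2v, Matrix.mulVec_zero] at h1
        exact h1
      have hK2inv : ∀ g : φ.ker, ∀ y ∈ W.comap J2, ρs g *ᵥ y ∈ W.comap J2 := by
        intro g y hy
        rw [Submodule.mem_comap] at hy ⊢
        have hy' : vcat 0 y ∈ W := hy
        show vcat 0 (ρs g *ᵥ y) ∈ W
        have h1 := hWk g _ hy'
        rw [hblockv, hL1v, hL2v, Matrix.mulVec_zero] at h1
        exact h1
      have hW1inv : ∀ g : φ.ker, ∀ x ∈ W.map L1,
          (ρ g : Matrix (Fin n) (Fin n) ℂ) *ᵥ x ∈ W.map L1 := by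
        rintro g x ⟨w, hw, rfl⟩
        refine ⟨blocks (ρ g : Matrix (Fin n) (Fin n) ℂ) 0 0 (ρs g) *ᵥ w, hWk g w hw, ?_⟩
        rw [hblockv, hL1v]
      have hW2inv : ∀ g : φ.ker, ∀ y ∈ W.map L2, ρs g *ᵥ y ∈ W.map L2 := by
        rintro g y ⟨w, hw, rfl⟩
        refine ⟨blocks (ρ g : Matrix (Fin n) (Fin n) ℂ) 0 0 (ρs g) *ᵥ w, hWk g w hw, ?_⟩
        rw [hblockv, hL2v]
      -- both projections are nonzero
      obtain ⟨w0, hw0W, hw00⟩ := (Submodule.ne_bot_iff W).mp hWbot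
      have hJw0 := hWa w0 hw0W
      rw [hblockva] at hJw0
      have hW12 : W.map L1 ≠ ⊥ ∧ W.map L2 ≠ ⊥ := by
        have hcomp : L1 w0 ≠ 0 ∨ L2 w0 ≠ 0 := by
          by_contra hcon
          push_neg at hcon
          apply hw00
          rw [← hvL w0, hcon.1, hcon.2, vcat_zero]
        rcases hcomp with h1 | h2
        · constructor
          · intro hb
            have hm : L1 w0 ∈ W.map L1 := ⟨w0, hw0W, rfl⟩
            rw [hb, Submodule.mem_bot] at hm
            exact h1 hm
          · intro hb
            have hm : L2 (vcat (P *ᵥ conjVec (L2 w0)) (conjVec (L1 w0))) ∈ W.map L2 :=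
              ⟨_, hJw0, rfl⟩
            rw [hL2v, hb, Submodule.mem_bot, conjVec_eq_zero] at hm
            exact h1 hm
        · constructor
          · intro hb
            have hm : L1 (vcat (P *ᵥ conjVec (L2 w0)) (conjVec (L1 w0))) ∈ W.map L1 :=
              ⟨_, hJw0, rfl⟩
            rw [hL1v, hb, Submodule.mem_bot] at hm
            apply h2
            have h4 := unit_mulVec_eq_zero (u := ρ ⟨a * a, sq_mem φ a⟩) hm
            rwa [conjVec_eq_zero] at h4
          · intro hb
            have hm : L2 w0 ∈ W.map L2 := ⟨w0, hw0W, rfl⟩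
            rw [hb, Submodule.mem_bot] at hm
            exact h2 hm
      have hW1top : W.map L1 = ⊤ := (hirr' _ hW1inv).resolve_left hW12.1
      have hW2top : W.map L2 = ⊤ := (hirrs _ hW2inv).resolve_left hW12.2
      -- helper to conclude W = ⊤
      have hWtop_of : (∀ x : Fin n → ℂ, vcat x 0 ∈ W) →
          (∀ y : Fin n → ℂ, vcat 0 y ∈ W) → W = ⊤ := by
        intro h1 h2
        rw [Submodule.eq_top_iff']
        intro v
        have h3 := W.add_mem (h1 (L1 v)) (h2 (L2 v))
        rwa [vcat_add, add_zero, zero_add, hvL] at h3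
      by_cases hK1 : W.comap J1 = ⊤
      · have h1 : ∀ x : Fin n → ℂ, vcat x 0 ∈ W := by
          intro x
          have hx : x ∈ W.comap J1 := hK1 ▸ Submodule.mem_top
          exact hx
        have h2 : ∀ y : Fin n → ℂ, vcat 0 y ∈ W := by
          intro y
          have h3 := hWa _ (h1 (conjVec y))
          rw [hblockva, hL1v, hL2v, conjVec_zero, Matrix.mulVec_zero, conjVec_conjVec] at h3
          exact h3
        exact hWtop_of h1 h2
      by_cases hK2 : W.comap J2 = ⊤
      · have h2 : ∀ y : Fin n → ℂ, vcat 0 y ∈ W := by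
          intro y
          have hy : y ∈ W.comap J2 := hK2 ▸ Submodule.mem_top
          exact hy
        have h1 : ∀ x : Fin n → ℂ, vcat x 0 ∈ W := by
          intro x
          have h3 := hWa _ (h2 (conjVec
            ((↑(ρ ⟨a * a, sq_mem φ a⟩)⁻¹ : Matrix (Fin n) (Fin n) ℂ) *ᵥ x)))
          rw [hblockva, hL1v, hL2v, conjVec_zero, conjVec_conjVec, Matrix.mulVec_mulVec] at h3
          rw [hPdef, Units.mul_inv, Matrix.one_mulVec] at h3
          exact h3
        exact hWtop_of h1 h2
      exfalso
      have hK1b : W.comap J1 = ⊥ := (hirr' _ hK1inv).resolve_right hK1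
      have hK2b : W.comap J2 = ⊥ := (hirrs _ hK2inv).resolve_right hK2
      -- W is the graph of an invertible intertwiner, contradiction
      let f : W →ₗ[ℂ] (Fin n → ℂ) := L1.comp W.subtype
      have hfinj : Function.Injective f := by
        rw [← LinearMap.ker_eq_bot, Submodule.eq_bot_iff]
        intro w hw
        rw [LinearMap.mem_ker] at hw
        have hw' : L1 (w : Fin (n + n) → ℂ) = 0 := hw
        have hmem2 : L2 (w : Fin (n + n) → ℂ) ∈ W.comap J2 := by
          rw [Submodule.mem_comap]
          show vcat 0 (L2 (w : Fin (n + n) → ℂ)) ∈ W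
          rw [← hw', hvL]
          exact w.2
        rw [hK2b, Submodule.mem_bot] at hmem2
        have hz : (w : Fin (n + n) → ℂ) = 0 := by
          rw [← hvL (w : Fin (n + n) → ℂ), hw', hmem2, vcat_zero]
        exact Subtype.ext hz
      have hfsurj : Function.Surjective f := by
        intro x
        have hx : x ∈ W.map L1 := hW1top ▸ Submodule.mem_top
        obtain ⟨w, hw, hwx⟩ := hx
        exact ⟨⟨w, hw⟩, hwx⟩
      let e : W ≃ₗ[ℂ] (Fin n → ℂ) := LinearEquiv.ofBijective f ⟨hfinj, hfsurj⟩
      let gm : (Fin n → ℂ) →ₗ[ℂ] (Fin n → ℂ) :=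
        (L2.comp W.subtype).comp (e.symm : (Fin n → ℂ) →ₗ[ℂ] W)
      have hkey1 : ∀ x : Fin n → ℂ, vcat x (gm x) ∈ W := by
        intro x
        have h1 : L1 ((e.symm x : W) : Fin (n + n) → ℂ) = x := e.apply_symm_apply x
        have heq : vcat x (gm x) = ((e.symm x : W) : Fin (n + n) → ℂ) := by
          calc vcat x (gm x)
              = vcat (L1 ((e.symm x : W) : Fin (n + n) → ℂ))
                (L2 ((e.symm x : W) : Fin (n + n) → ℂ)) := by rw [h1]; rfl
            _ = ((e.symm x : W) : Fin (n + n) → ℂ) := hvL _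
        rw [heq]
        exact (e.symm x).2
      have hkey2 : ∀ w : Fin (n + n) → ℂ, w ∈ W → gm (L1 w) = L2 w := by
        intro w hw
        have h1 : e.symm (L1 w) = ⟨w, hw⟩ := by
          apply e.injective
          rw [e.apply_symm_apply]
          rfl
        show L2 ((e.symm (L1 w) : W) : Fin (n + n) → ℂ) = L2 w
        rw [h1]
      have hgmker : LinearMap.ker gm = ⊥ := by
        rw [Submodule.eq_bot_iff]
        intro x hx
        rw [LinearMap.mem_ker] at hx
        have h1 := hkey1 x
        rw [hx] at h1
        have hx1 : x ∈ W.comap J1 := h1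
        rw [hK1b, Submodule.mem_bot] at hx1
        exact hx1
      have hgmsurj : Function.Surjective gm := by
        intro y
        have hy : y ∈ W.map L2 := hW2top ▸ Submodule.mem_top
        obtain ⟨w, hw, rfl⟩ := hy
        exact ⟨L1 w, hkey2 w hw⟩
      have hint : ∀ g : φ.ker, ∀ x : Fin n → ℂ,
          gm ((ρ g : Matrix (Fin n) (Fin n) ℂ) *ᵥ x) = ρs g *ᵥ gm x := by
        intro g x
        have h1 := hWk g _ (hkey1 x)
        rw [hblockv, hL1v, hL2v] at h1
        have h2 := hkey2 _ h1
        rw [hL1v, hL2v] at h2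
        exact h2
      have hgmunit : IsUnit gm :=
        (Module.End.isUnit_iff gm).mpr ⟨LinearMap.ker_eq_bot.mp hgmker, hgmsurj⟩
      have hSunit : IsUnit (LinearMap.toMatrixAlgEquiv' gm) :=
        hgmunit.map (LinearMap.toMatrixAlgEquiv' :
          ((Fin n → ℂ) →ₗ[ℂ] (Fin n → ℂ)) ≃ₐ[ℂ] Matrix (Fin n) (Fin n) ℂ)
      have hSapp : ∀ x : Fin n → ℂ, LinearMap.toMatrixAlgEquiv' gm *ᵥ x = gm x := by
        intro x
        rw [← Matrix.toLinAlgEquiv'_apply, Matrix.toLinAlgEquiv'_toMatrixAlgEquiv']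
      have hSrel : ∀ g : φ.ker,
          LinearMap.toMatrixAlgEquiv' gm * (ρ g : Matrix (Fin n) (Fin n) ℂ) =
            ρs g * LinearMap.toMatrixAlgEquiv' gm := by
        intro g
        apply mulVec_ext
        intro v
        rw [← Matrix.mulVec_mulVec, ← Matrix.mulVec_mulVec, hSapp, hSapp, hint]
      refine hnoniso ⟨hSunit.unit⁻¹, fun g => ?_⟩
      exact unit_swap hSunit.unit _ _ (by rw [hSunit.unit_spec]; exact hSrel g)
  exact ⟨hIrr, ⟨(AlgEquiv.ofBijective Ψ ⟨hinj, hsurj⟩).symm⟩⟩
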